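/- arXiv:1306.2210 — 3 statements merged into one kernel-verified Lean document; each statement's English description precedes it below -/
import Mathlib

section
/- Let p₁(z) = z⁴ − z³ − 4z − 8. Then p₁ has a real root λ₁ with 2.34 < λ₁ < 2.35, and λ₁ is strictly larger in absolute value than every other complex root of p₁. -/
/-!
Substitute `u = 1/z`: for `z ≠ 0`, `p₁(z) = 0` iff `g(u) = 1`, where `g = revTail` has nonnegative
coefficients. Hence `1 = Re g(u) ≤ g(‖u‖)`, and since `g` is increasing on `[0, ∞)` with
`g(1/λ₁) = 1`, every root has `‖1/z‖ ≥ 1/λ₁`. If equality holds, then `Re g(u) = g(‖u‖)` forces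
`Re u = ‖u‖`, so `u = 1/λ₁` and `z = λ₁`.
-/

open Complex Set

def revTail {R : Type*} [CommRing R] (u : R) : R := u + 4 * u ^ 3 + 8 * u ^ 4

theorem revTail_inv_eq_one {K : Type*} [Field K] {z : K} (hz0 : z ≠ 0)
    (hz : z ^ 4 - z ^ 3 - 4 * z - 8 = 0) : revTail z⁻¹ = 1 := by
  unfold revTail
  field_simp
  linear_combination -hz

theorem revTail_strictMonoOn : StrictMonoOn (revTail : ℝ → ℝ) (Ici 0) := by
  intro a (ha : 0 ≤ a) b _ hab
  have h3 : a ^ 3 < b ^ 3 := pow_lt_pow_left₀ hab ha (by norm_num)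
  have h4 : a ^ 4 < b ^ 4 := pow_lt_pow_left₀ hab ha (by norm_num)
  unfold revTail
  linarith

theorem Complex.re_pow_le_norm_pow (u : ℂ) (n : ℕ) : (u ^ n).re ≤ ‖u‖ ^ n :=
  norm_pow u n ▸ re_le_norm _

theorem norm_sub_re_le_revTail_norm_sub_re (u : ℂ) :
    ‖u‖ - u.re ≤ revTail ‖u‖ - (revTail u).re := by
  simp only [revTail, add_re, mul_re, re_ofNat, im_ofNat, zero_mul, sub_zero]
  linarith [re_pow_le_norm_pow u 3, re_pow_le_norm_pow u 4]

theorem exists_root_mem_Ioo :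
    ∃ lam ∈ Ioo (2.34 : ℝ) 2.35, lam ^ 4 - lam ^ 3 - 4 * lam - 8 = 0 :=
  intermediate_value_Ioo (by norm_num) (by fun_prop) (by norm_num)

/-- The polynomial `p₁(z) = z⁴ − z³ − 4z − 8` has a real root `λ₁` with
`2.34 < λ₁ < 2.35`, and `λ₁` is strictly larger in absolute value than every
other complex root of `p₁`. -/
theorem p1_dominant_root :
    ∃ lam : ℝ, lam ^ 4 - lam ^ 3 - 4 * lam - 8 = 0 ∧
      2.34 < lam ∧ lam < 2.35 ∧
      ∀ z : ℂ, z ^ 4 - z ^ 3 - 4 * z - 8 = 0 → z ≠ (lam : ℂ) → ‖z‖ < lam := by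
  obtain ⟨lam, ⟨hlo, hhi⟩, hroot⟩ := exists_root_mem_Ioo
  refine ⟨lam, hroot, hlo, hhi, fun z hz hne ↦ not_le.1 fun hle ↦ hne ?_⟩
  have hlam : 0 < lam := by linarith
  have hz0 : z ≠ 0 := norm_pos_iff.1 (hlam.trans_le hle)
  set u := z⁻¹
  have hgu : revTail u = 1 := revTail_inv_eq_one hz0 hz
  have hglam : revTail lam⁻¹ = 1 := revTail_inv_eq_one hlam.ne' hroot
  have hkey := norm_sub_re_le_revTail_norm_sub_re u
  have hu : ‖u‖ ≤ lam⁻¹ := norm_inv z ▸ inv_anti₀ hlam hle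
  have hnorm : ‖u‖ = lam⁻¹ := by
    refine revTail_strictMonoOn.injOn (norm_nonneg _) (inv_nonneg.2 hlam.le) (le_antisymm ?_ ?_)
    · exact revTail_strictMonoOn.monotoneOn (norm_nonneg _) (inv_nonneg.2 hlam.le) hu
    · rw [hgu, one_re] at hkey
      linarith [re_le_norm u]
  have hre : u.re = ‖u‖ := by
    rw [hgu, one_re, hnorm, hglam] at hkey
    linarith [re_le_norm u]
  have hreal : u = ((lam⁻¹ : ℝ) : ℂ) := hnorm ▸ eq_coe_norm_of_nonneg (re_eq_norm.1 hre)
  rw [ofReal_inv] at hreal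
  exact inv_injective hreal
end

section
/- The polynomial p₂(z) = z⁹ − 3z⁸ − 16z⁶ − 192z⁵ + 384z⁴ + 128z³ + 6144z − 8192 is irreducible over ℚ. -/
open Polynomial

namespace P2Cert

set_option maxHeartbeats 1000000
set_option maxRecDepth 100000

local instance : Fact (Nat.Prime 59) := ⟨by norm_num⟩

noncomputable def f : (ZMod 59)[X] :=
  X ^ 9 - 3 * X ^ 8 - 16 * X ^ 6 - 192 * X ^ 5 + 384 * X ^ 4 + 128 * X ^ 3 + 6144 * X - 8192

lemma h59 : (59 : (ZMod 59)[X]) = 0 := by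
  have h1 : ((59 : ℕ) : (ZMod 59)[X]) = 0 := by
    rw [← Polynomial.C_eq_natCast, ZMod.natCast_self, map_zero]
  exact_mod_cast h1

lemma mulmod {A B a b c : (ZMod 59)[X]} (h1 : f ∣ A - a) (h2 : f ∣ B - b)
    (h3 : f ∣ a * b - c) : f ∣ A * B - c := by
  have key : A * B - c = (A - a) * B + a * (B - b) + (a * b - c) := by ring
  rw [key]
  exact dvd_add (dvd_add (h1.mul_right B) (h2.mul_left a)) h3

lemma powstep {c : (ZMod 59)[X]} {a b n : ℕ} (hn : a + b = n) (h : f ∣ X ^ a * X ^ b - c) :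
    f ∣ X ^ n - c := by
  subst hn; rwa [pow_add]

lemma D1 : f ∣ X ^ 1 - X := by simp

lemma D2 : f ∣ X ^ 2 - (X ^ 2) := by
  have h3 : f ∣ (X) * (X) - (X ^ 2) :=
    ⟨0, by rw [f]; linear_combination (0 : (ZMod 59)[X]) * h59⟩
  have h := mulmod D1 D1 h3
  rwa [← pow_add, show 1 + 1 = 2 from rfl] at h

lemma D3 : f ∣ X ^ 3 - (X ^ 3) := by
  have h3 : f ∣ (X ^ 2) * (X) - (X ^ 3) :=
    ⟨0, by rw [f]; linear_combination (0 : (ZMod 59)[X]) * h59⟩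
  have h := mulmod D2 D1 h3
  rwa [← pow_add, show 2 + 1 = 3 from rfl] at h

lemma D6 : f ∣ X ^ 6 - (X ^ 6) := by
  have h3 : f ∣ (X ^ 3) * (X ^ 3) - (X ^ 6) :=
    ⟨0, by rw [f]; linear_combination (0 : (ZMod 59)[X]) * h59⟩
  have h := mulmod D3 D3 h3
  rwa [← pow_add, show 3 + 3 = 6 from rfl] at h

lemma D7 : f ∣ X ^ 7 - (X ^ 7) := by
  have h3 : f ∣ (X ^ 6) * (X) - (X ^ 7) :=
    ⟨0, by rw [f]; linear_combination (0 : (ZMod 59)[X]) * h59⟩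
  have h := mulmod D6 D1 h3
  rwa [← pow_add, show 6 + 1 = 7 from rfl] at h

lemma D14 : f ∣ X ^ 14 - (52 + 3 * X + 24 * X ^ 2 + 13 * X ^ 3 + 3 * X ^ 4 + 23 * X ^ 5 + 36 * X ^ 6 + 54 * X ^ 7 + 37 * X ^ 8) := by
  have h3 : f ∣ (X ^ 7) * (X ^ 7) - (52 + 3 * X + 24 * X ^ 2 + 13 * X ^ 3 + 3 * X ^ 4 + 23 * X ^ 5 + 36 * X ^ 6 + 54 * X ^ 7 + 37 * X ^ 8) :=
    ⟨27 + 15 * X + 43 * X ^ 2 + 9 * X ^ 3 + 3 * X ^ 4 + X ^ 5, by rw [f]; linear_combination (3748 + (-729) * X + 4408 * X ^ 2 + (-3287) * X ^ 3 + (-729) * X ^ 4 + (-277) * X ^ 5 + (-348) * X ^ 6 + 78 * X ^ 7 + 20 * X ^ 8 + 6 * X ^ 9 + 6 * X ^ 10 : (ZMod 59)[X]) * h59⟩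
  have h := mulmod D7 D7 h3
  rwa [← pow_add, show 7 + 7 = 14 from rfl] at h

lemma D28 : f ∣ X ^ 28 - (41 + 48 * X + 56 * X ^ 2 + X ^ 3 + 26 * X ^ 5 + 9 * X ^ 6 + 25 * X ^ 7 + 3 * X ^ 8) := by
  have h3 : f ∣ (52 + 3 * X + 24 * X ^ 2 + 13 * X ^ 3 + 3 * X ^ 4 + 23 * X ^ 5 + 36 * X ^ 6 + 54 * X ^ 7 + 37 * X ^ 8) * (52 + 3 * X + 24 * X ^ 2 + 13 * X ^ 3 + 3 * X ^ 4 + 23 * X ^ 5 + 36 * X ^ 6 + 54 * X ^ 7 + 37 * X ^ 8) - (41 + 48 * X + 56 * X ^ 2 + X ^ 3 + 26 * X ^ 5 + 9 * X ^ 6 + 25 * X ^ 7 + 3 * X ^ 8) :=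
    ⟨14 + 30 * X + 16 * X ^ 2 + 38 * X ^ 3 + 46 * X ^ 4 + 35 * X ^ 5 + 20 * X ^ 6 + 12 * X ^ 7, by rw [f]; linear_combination (1989 + 2712 * X + (-861) * X ^ 2 + 3605 * X ^ 3 + 2290 * X ^ 4 + (-64) * X ^ 5 + (-882) * X ^ 6 + (-585) * X ^ 7 + (-1386) * X ^ 8 + (-44) * X ^ 9 + 37 * X ^ 10 + 48 * X ^ 11 + 114 * X ^ 12 + 99 * X ^ 13 + 95 * X ^ 14 + 68 * X ^ 15 + 23 * X ^ 16 : (ZMod 59)[X]) * h59⟩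
  have h := mulmod D14 D14 h3
  rwa [← pow_add, show 14 + 14 = 28 from rfl] at h

lemma D29 : f ∣ X ^ 29 - (32 + 17 * X + 48 * X ^ 2 + 26 * X ^ 3 + 29 * X ^ 4 + 45 * X ^ 5 + 15 * X ^ 6 + 9 * X ^ 7 + 34 * X ^ 8) := by
  have h3 : f ∣ (41 + 48 * X + 56 * X ^ 2 + X ^ 3 + 26 * X ^ 5 + 9 * X ^ 6 + 25 * X ^ 7 + 3 * X ^ 8) * (X) - (32 + 17 * X + 48 * X ^ 2 + 26 * X ^ 3 + 29 * X ^ 4 + 45 * X ^ 5 + 15 * X ^ 6 + 9 * X ^ 7 + 34 * X ^ 8) :=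
    ⟨3, by rw [f]; linear_combination (416 + (-312) * X + (-6) * X ^ 3 + (-20) * X ^ 4 + 9 * X ^ 5 + X ^ 6 : (ZMod 59)[X]) * h59⟩
  have h := mulmod D28 D1 h3
  rwa [← pow_add, show 28 + 1 = 29 from rfl] at h

lemma D58 : f ∣ X ^ 58 - (1 + 50 * X + 45 * X ^ 2 + 39 * X ^ 3 + 54 * X ^ 4 + 55 * X ^ 5 + 16 * X ^ 6 + 17 * X ^ 7 + 37 * X ^ 8) := by
  have h3 : f ∣ (32 + 17 * X + 48 * X ^ 2 + 26 * X ^ 3 + 29 * X ^ 4 + 45 * X ^ 5 + 15 * X ^ 6 + 9 * X ^ 7 + 34 * X ^ 8) * (32 + 17 * X + 48 * X ^ 2 + 26 * X ^ 3 + 29 * X ^ 4 + 45 * X ^ 5 + 15 * X ^ 6 + 9 * X ^ 7 + 34 * X ^ 8) - (1 + 50 * X + 45 * X ^ 2 + 39 * X ^ 3 + 54 * X ^ 4 + 55 * X ^ 5 + 16 * X ^ 6 + 17 * X ^ 7 + 37 * X ^ 8) :=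
    ⟨35 + 58 * X + 35 * X ^ 2 + 10 * X ^ 3 + 17 * X ^ 4 + 7 * X ^ 5 + 9 * X ^ 6 + 35 * X ^ 7, by rw [f]; linear_combination (4877 + 4426 * X + (-1124) * X ^ 2 + (-2277) * X ^ 3 + 1050 * X ^ 4 + (-1031) * X ^ 5 + 570 * X ^ 6 + 4067 * X ^ 7 + (-3607) * X ^ 8 + 87 * X ^ 9 + 6 * X ^ 10 + (-135) * X ^ 11 + 168 * X ^ 12 + 66 * X ^ 13 + 19 * X ^ 14 + 12 * X ^ 15 + 19 * X ^ 16 : (ZMod 59)[X]) * h59⟩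
  have h := mulmod D29 D29 h3
  rwa [← pow_add, show 29 + 29 = 58 from rfl] at h

lemma D59 : f ∣ X ^ 59 - (21 + 50 * X ^ 2 + 29 * X ^ 3 + 50 * X ^ 4 + 19 * X ^ 5 + 57 * X ^ 6 + 16 * X ^ 7 + 10 * X ^ 8) := by
  have h3 : f ∣ (1 + 50 * X + 45 * X ^ 2 + 39 * X ^ 3 + 54 * X ^ 4 + 55 * X ^ 5 + 16 * X ^ 6 + 17 * X ^ 7 + 37 * X ^ 8) * (X) - (21 + 50 * X ^ 2 + 29 * X ^ 3 + 50 * X ^ 4 + 19 * X ^ 5 + 57 * X ^ 6 + 16 * X ^ 7 + 10 * X ^ 8) :=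
    ⟨37, by rw [f]; linear_combination (5137 + (-3853) * X + (-80) * X ^ 3 + (-241) * X ^ 4 + 121 * X ^ 5 + 10 * X ^ 6 + 2 * X ^ 8 : (ZMod 59)[X]) * h59⟩
  have h := mulmod D58 D1 h3
  rwa [← pow_add, show 58 + 1 = 59 from rfl] at h

lemma D118 : f ∣ X ^ 118 - (23 + 51 * X + 56 * X ^ 2 + 49 * X ^ 3 + 14 * X ^ 4 + 38 * X ^ 5 + 46 * X ^ 6 + 45 * X ^ 7 + 44 * X ^ 8) := by
  have h3 : f ∣ (21 + 50 * X ^ 2 + 29 * X ^ 3 + 50 * X ^ 4 + 19 * X ^ 5 + 57 * X ^ 6 + 16 * X ^ 7 + 10 * X ^ 8) * (21 + 50 * X ^ 2 + 29 * X ^ 3 + 50 * X ^ 4 + 19 * X ^ 5 + 57 * X ^ 6 + 16 * X ^ 7 + 10 * X ^ 8) - (23 + 51 * X + 56 * X ^ 2 + 49 * X ^ 3 + 14 * X ^ 4 + 38 * X ^ 5 + 46 * X ^ 6 + 45 * X ^ 7 + 44 * X ^ 8) :=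
    ⟨53 + 39 * X + 22 * X ^ 2 + 58 * X ^ 3 + 2 * X ^ 4 + 11 * X ^ 5 + 30 * X ^ 6 + 41 * X ^ 7, by rw [f]; linear_combination (7366 + (-105) * X + (-972) * X ^ 2 + 5667 * X ^ 3 + (-6114) * X ^ 4 + 1252 * X ^ 5 + 3031 * X ^ 6 + 2361 * X ^ 7 + (-3945) * X ^ 8 + 2 * X ^ 9 + (-112) * X ^ 10 + (-90) * X ^ 11 + 223 * X ^ 12 + 49 * X ^ 13 + 25 * X ^ 14 + 7 * X ^ 15 + X ^ 16 : (ZMod 59)[X]) * h59⟩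
  have h := mulmod D59 D59 h3
  rwa [← pow_add, show 59 + 59 = 118 from rfl] at h

lemma D177 : f ∣ X ^ 177 - (15 + X + 40 * X ^ 2 + 42 * X ^ 3 + 51 * X ^ 4 + 4 * X ^ 5 + 37 * X ^ 6 + 53 * X ^ 7 + 30 * X ^ 8) := by
  have h3 : f ∣ (23 + 51 * X + 56 * X ^ 2 + 49 * X ^ 3 + 14 * X ^ 4 + 38 * X ^ 5 + 46 * X ^ 6 + 45 * X ^ 7 + 44 * X ^ 8) * (21 + 50 * X ^ 2 + 29 * X ^ 3 + 50 * X ^ 4 + 19 * X ^ 5 + 57 * X ^ 6 + 16 * X ^ 7 + 10 * X ^ 8) - (15 + X + 40 * X ^ 2 + 42 * X ^ 3 + 51 * X ^ 4 + 4 * X ^ 5 + 37 * X ^ 6 + 53 * X ^ 7 + 30 * X ^ 8) :=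
    ⟨52 + 53 * X + 43 * X ^ 2 + 4 * X ^ 3 + 47 * X ^ 4 + 18 * X ^ 5 + 55 * X ^ 6 + 27 * X ^ 7, by rw [f]; linear_combination (7228 + 1962 * X + 490 * X ^ 2 + (-3964) * X ^ 3 + 5752 * X ^ 4 + (-2531) * X ^ 5 + 5798 * X ^ 6 + (-1783) * X ^ 7 + (-2957) * X ^ 8 + 88 * X ^ 9 + (-197) * X ^ 10 + 131 * X ^ 11 + 214 * X ^ 12 + 84 * X ^ 13 + 65 * X ^ 14 + 20 * X ^ 15 + 7 * X ^ 16 : (ZMod 59)[X]) * h59⟩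
  have h := mulmod D118 D59 h3
  rwa [← pow_add, show 118 + 59 = 177 from rfl] at h

lemma D354 : f ∣ X ^ 354 - (41 + 24 * X + 18 * X ^ 2 + 40 * X ^ 3 + 55 * X ^ 4 + 51 * X ^ 5 + 49 * X ^ 6 + 41 * X ^ 7 + 32 * X ^ 8) := by
  have h3 : f ∣ (15 + X + 40 * X ^ 2 + 42 * X ^ 3 + 51 * X ^ 4 + 4 * X ^ 5 + 37 * X ^ 6 + 53 * X ^ 7 + 30 * X ^ 8) * (15 + X + 40 * X ^ 2 + 42 * X ^ 3 + 51 * X ^ 4 + 4 * X ^ 5 + 37 * X ^ 6 + 53 * X ^ 7 + 30 * X ^ 8) - (41 + 24 * X + 18 * X ^ 2 + 40 * X ^ 3 + 55 * X ^ 4 + 51 * X ^ 5 + 49 * X ^ 6 + 41 * X ^ 7 + 32 * X ^ 8) :=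
    ⟨27 + 16 * X + 32 * X ^ 2 + 27 * X ^ 3 + 16 * X ^ 4 + 13 * X ^ 5 + 39 * X ^ 6 + 15 * X ^ 7, by rw [f]; linear_combination (3752 + (-590) * X + 2797 * X ^ 2 + 380 * X ^ 3 + (-747) * X ^ 4 + 113 * X ^ 5 + 3971 * X ^ 6 + (-1975) * X ^ 7 + (-1480) * X ^ 8 + 23 * X ^ 9 + (-58) * X ^ 10 + 173 * X ^ 11 + 142 * X ^ 12 + 75 * X ^ 13 + 87 * X ^ 14 + 54 * X ^ 15 + 15 * X ^ 16 : (ZMod 59)[X]) * h59⟩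
  have h := mulmod D177 D177 h3
  rwa [← pow_add, show 177 + 177 = 354 from rfl] at h

lemma D413 : f ∣ X ^ 413 - (58 + 38 * X + 45 * X ^ 2 + 47 * X ^ 3 + 13 * X ^ 4 + X ^ 5 + 58 * X ^ 6 + 20 * X ^ 7 + 15 * X ^ 8) := by
  have h3 : f ∣ (41 + 24 * X + 18 * X ^ 2 + 40 * X ^ 3 + 55 * X ^ 4 + 51 * X ^ 5 + 49 * X ^ 6 + 41 * X ^ 7 + 32 * X ^ 8) * (21 + 50 * X ^ 2 + 29 * X ^ 3 + 50 * X ^ 4 + 19 * X ^ 5 + 57 * X ^ 6 + 16 * X ^ 7 + 10 * X ^ 8) - (58 + 38 * X + 45 * X ^ 2 + 47 * X ^ 3 + 13 * X ^ 4 + X ^ 5 + 58 * X ^ 6 + 20 * X ^ 7 + 15 * X ^ 8) :=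
    ⟨4 + 22 * X + 42 * X ^ 2 + 43 * X ^ 3 + 43 * X ^ 4 + 2 * X ^ 5 + 53 * X ^ 6 + 25 * X ^ 7, by rw [f]; linear_combination (569 + 2646 * X + 3581 * X ^ 2 + 1642 * X ^ 3 + 1500 * X ^ 4 + (-4327) * X ^ 5 + 7002 * X ^ 6 + (-2120) * X ^ 7 + (-2568) * X ^ 8 + 192 * X ^ 9 + (-207) * X ^ 10 + 149 * X ^ 11 + 208 * X ^ 12 + 78 * X ^ 13 + 53 * X ^ 14 + 16 * X ^ 15 + 5 * X ^ 16 : (ZMod 59)[X]) * h59⟩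
  have h := mulmod D354 D59 h3
  rwa [← pow_add, show 354 + 59 = 413 from rfl] at h

lemma D826 : f ∣ X ^ 826 - (38 + 27 * X + 20 * X ^ 2 + 23 * X ^ 3 + 3 * X ^ 4 + 24 * X ^ 5 + 42 * X ^ 6 + 11 * X ^ 7 + 16 * X ^ 8) := by
  have h3 : f ∣ (58 + 38 * X + 45 * X ^ 2 + 47 * X ^ 3 + 13 * X ^ 4 + X ^ 5 + 58 * X ^ 6 + 20 * X ^ 7 + 15 * X ^ 8) * (58 + 38 * X + 45 * X ^ 2 + 47 * X ^ 3 + 13 * X ^ 4 + X ^ 5 + 58 * X ^ 6 + 20 * X ^ 7 + 15 * X ^ 8) - (38 + 27 * X + 20 * X ^ 2 + 23 * X ^ 3 + 3 * X ^ 4 + 24 * X ^ 5 + 42 * X ^ 6 + 11 * X ^ 7 + 16 * X ^ 8) :=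
    ⟨9 + 33 * X + 14 * X ^ 2 + 43 * X ^ 3 + 9 * X ^ 4 + 6 * X ^ 5 + 36 * X ^ 6 + 48 * X ^ 7, by rw [f]; linear_combination (1306 + 3719 * X + (-1380) * X ^ 2 + 4643 * X ^ 3 + (-3238) * X ^ 4 + (-230) * X ^ 5 + 4471 * X ^ 6 + 2807 * X ^ 7 + (-4778) * X ^ 8 + 68 * X ^ 9 + (-236) * X ^ 10 + (-157) * X ^ 11 + 230 * X ^ 12 + 53 * X ^ 13 + 38 * X ^ 14 + 12 * X ^ 15 + 3 * X ^ 16 : (ZMod 59)[X]) * h59⟩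
  have h := mulmod D413 D413 h3
  rwa [← pow_add, show 413 + 413 = 826 from rfl] at h

lemma D1652 : f ∣ X ^ 1652 - (38 + 51 * X + 17 * X ^ 2 + 15 * X ^ 3 + 12 * X ^ 4 + 41 * X ^ 5 + 37 * X ^ 6 + 19 * X ^ 7 + 21 * X ^ 8) := by
  have h3 : f ∣ (38 + 27 * X + 20 * X ^ 2 + 23 * X ^ 3 + 3 * X ^ 4 + 24 * X ^ 5 + 42 * X ^ 6 + 11 * X ^ 7 + 16 * X ^ 8) * (38 + 27 * X + 20 * X ^ 2 + 23 * X ^ 3 + 3 * X ^ 4 + 24 * X ^ 5 + 42 * X ^ 6 + 11 * X ^ 7 + 16 * X ^ 8) - (38 + 51 * X + 17 * X ^ 2 + 15 * X ^ 3 + 12 * X ^ 4 + 41 * X ^ 5 + 37 * X ^ 6 + 19 * X ^ 7 + 21 * X ^ 8) :=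
    ⟨12 + 15 * X + 38 * X ^ 2 + 36 * X ^ 3 + 26 * X ^ 4 + 46 * X ^ 5 + 58 * X ^ 6 + 20 * X ^ 7, by rw [f]; linear_combination (1690 + 867 * X + 3752 * X ^ 2 + 1063 * X ^ 3 + (-218) * X ^ 4 + 3587 * X ^ 5 + 3076 * X ^ 6 + (-3355) * X ^ 7 + (-2146) * X ^ 8 + (-273) * X ^ 9 + (-229) * X ^ 10 + 120 * X ^ 11 + 122 * X ^ 12 + 36 * X ^ 13 + 27 * X ^ 14 + 6 * X ^ 15 + 4 * X ^ 16 : (ZMod 59)[X]) * h59⟩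
  have h := mulmod D826 D826 h3
  rwa [← pow_add, show 826 + 826 = 1652 from rfl] at h

lemma D1711 : f ∣ X ^ 1711 - (58 + 16 * X + 20 * X ^ 2 + 57 * X ^ 3 + 2 * X ^ 4 + 40 * X ^ 5 + 12 * X ^ 7 + 7 * X ^ 8) := by
  have h3 : f ∣ (38 + 51 * X + 17 * X ^ 2 + 15 * X ^ 3 + 12 * X ^ 4 + 41 * X ^ 5 + 37 * X ^ 6 + 19 * X ^ 7 + 21 * X ^ 8) * (21 + 50 * X ^ 2 + 29 * X ^ 3 + 50 * X ^ 4 + 19 * X ^ 5 + 57 * X ^ 6 + 16 * X ^ 7 + 10 * X ^ 8) - (58 + 16 * X + 20 * X ^ 2 + 57 * X ^ 3 + 2 * X ^ 4 + 40 * X ^ 5 + 12 * X ^ 7 + 7 * X ^ 8) :=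
    ⟨56 + 15 * X + 32 * X ^ 2 + 16 * X ^ 3 + 31 * X ^ 4 + 29 * X ^ 5 + 35 * X ^ 6 + 33 * X ^ 7, by rw [f]; linear_combination (7788 + (-3731) * X + 2919 * X ^ 2 + (-1166) * X ^ 3 + 2317 * X ^ 4 + 904 * X ^ 5 + 1759 * X ^ 6 + 999 * X ^ 7 + (-3527) * X ^ 8 + (-59) * X ^ 9 + (-105) * X ^ 10 + (-9) * X ^ 11 + 191 * X ^ 12 + 52 * X ^ 13 + 33 * X ^ 14 + 10 * X ^ 15 + 3 * X ^ 16 : (ZMod 59)[X]) * h59⟩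
  have h := mulmod D1652 D59 h3
  rwa [← pow_add, show 1652 + 59 = 1711 from rfl] at h

lemma D3422 : f ∣ X ^ 3422 - (49 + 37 * X + 48 * X ^ 2 + 42 * X ^ 3 + 55 * X ^ 4 + 45 * X ^ 5 + 16 * X ^ 6 + 45 * X ^ 7 + 11 * X ^ 8) := by
  have h3 : f ∣ (58 + 16 * X + 20 * X ^ 2 + 57 * X ^ 3 + 2 * X ^ 4 + 40 * X ^ 5 + 12 * X ^ 7 + 7 * X ^ 8) * (58 + 16 * X + 20 * X ^ 2 + 57 * X ^ 3 + 2 * X ^ 4 + 40 * X ^ 5 + 12 * X ^ 7 + 7 * X ^ 8) - (49 + 37 * X + 48 * X ^ 2 + 42 * X ^ 3 + 55 * X ^ 4 + 45 * X ^ 5 + 16 * X ^ 6 + 45 * X ^ 7 + 11 * X ^ 8) :=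
    ⟨34 + 8 * X + 5 * X ^ 2 + 5 * X ^ 3 + 9 * X ^ 4 + 27 * X ^ 5 + 20 * X ^ 6 + 49 * X ^ 7, by rw [f]; linear_combination (4777 + (-2399) * X + (-96) * X ^ 2 + 222 * X ^ 3 + 531 * X ^ 4 + 2977 * X ^ 5 + 35 * X ^ 6 + 4741 * X ^ 7 + (-5103) * X ^ 8 + (-174) * X ^ 9 + (-91) * X ^ 10 + (-232) * X ^ 11 + 182 * X ^ 12 + 24 * X ^ 13 + 3 * X ^ 14 + 5 * X ^ 15 : (ZMod 59)[X]) * h59⟩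
  have h := mulmod D1711 D1711 h3
  rwa [← pow_add, show 1711 + 1711 = 3422 from rfl] at h

lemma D3481 : f ∣ X ^ 3481 - (48 + 13 * X + 56 * X ^ 2 + 24 * X ^ 3 + 29 * X ^ 4 + 4 * X ^ 5 + 24 * X ^ 6 + 47 * X ^ 7 + 55 * X ^ 8) := by
  have h3 : f ∣ (49 + 37 * X + 48 * X ^ 2 + 42 * X ^ 3 + 55 * X ^ 4 + 45 * X ^ 5 + 16 * X ^ 6 + 45 * X ^ 7 + 11 * X ^ 8) * (21 + 50 * X ^ 2 + 29 * X ^ 3 + 50 * X ^ 4 + 19 * X ^ 5 + 57 * X ^ 6 + 16 * X ^ 7 + 10 * X ^ 8) - (48 + 13 * X + 56 * X ^ 2 + 24 * X ^ 3 + 29 * X ^ 4 + 4 * X ^ 5 + 24 * X ^ 6 + 47 * X ^ 7 + 55 * X ^ 8) :=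
    ⟨50 + 47 * X + 15 * X ^ 2 + 49 * X ^ 3 + 16 * X ^ 4 + 9 * X ^ 5 + 12 * X ^ 6 + 51 * X ^ 7, by rw [f]; linear_combination (6959 + 1332 * X + (-2754) * X ^ 2 + 5203 * X ^ 3 + (-3189) * X ^ 4 + (-470) * X ^ 5 + 864 * X ^ 6 + 5720 * X ^ 7 + (-5105) * X ^ 8 + 144 * X ^ 9 + (-23) * X ^ 10 + (-174) * X ^ 11 + 230 * X ^ 12 + 73 * X ^ 13 + 26 * X ^ 14 + 13 * X ^ 15 + X ^ 16 : (ZMod 59)[X]) * h59⟩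
  have h := mulmod D3422 D59 h3
  rwa [← pow_add, show 3422 + 59 = 3481 from rfl] at h

lemma D6962 : f ∣ X ^ 6962 - (14 + 25 * X + 54 * X ^ 2 + 58 * X ^ 3 + 14 * X ^ 4 + 13 * X ^ 5 + 51 * X ^ 6 + 22 * X ^ 7 + 31 * X ^ 8) := by
  have h3 : f ∣ (48 + 13 * X + 56 * X ^ 2 + 24 * X ^ 3 + 29 * X ^ 4 + 4 * X ^ 5 + 24 * X ^ 6 + 47 * X ^ 7 + 55 * X ^ 8) * (48 + 13 * X + 56 * X ^ 2 + 24 * X ^ 3 + 29 * X ^ 4 + 4 * X ^ 5 + 24 * X ^ 6 + 47 * X ^ 7 + 55 * X ^ 8) - (14 + 25 * X + 54 * X ^ 2 + 58 * X ^ 3 + 14 * X ^ 4 + 13 * X ^ 5 + 51 * X ^ 6 + 22 * X ^ 7 + 31 * X ^ 8) :=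
    ⟨25 + 35 * X + 48 * X ^ 2 + 33 * X ^ 4 + 30 * X ^ 5 + 26 * X ^ 6 + 16 * X ^ 7, by rw [f]; linear_combination (3510 + 2277 * X + 3113 * X ^ 2 + (-4990) * X ^ 3 + 4454 * X ^ 4 + 543 * X ^ 5 + 399 * X ^ 6 + (-274) * X ^ 7 + (-1759) * X ^ 8 + (-6) * X ^ 9 + 71 * X ^ 10 + 82 * X ^ 11 + 131 * X ^ 12 + 51 * X ^ 13 + 83 * X ^ 14 + 88 * X ^ 15 + 51 * X ^ 16 : (ZMod 59)[X]) * h59⟩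
  have h := mulmod D3481 D3481 h3
  rwa [← pow_add, show 3481 + 3481 = 6962 from rfl] at h

lemma D10443 : f ∣ X ^ 10443 - (13 + 43 * X + 16 * X ^ 2 + 54 * X ^ 3 + 6 * X ^ 4 + 11 * X ^ 5 + 17 * X ^ 6 + 38 * X ^ 7 + 48 * X ^ 8) := by
  have h3 : f ∣ (14 + 25 * X + 54 * X ^ 2 + 58 * X ^ 3 + 14 * X ^ 4 + 13 * X ^ 5 + 51 * X ^ 6 + 22 * X ^ 7 + 31 * X ^ 8) * (48 + 13 * X + 56 * X ^ 2 + 24 * X ^ 3 + 29 * X ^ 4 + 4 * X ^ 5 + 24 * X ^ 6 + 47 * X ^ 7 + 55 * X ^ 8) - (13 + 43 * X + 16 * X ^ 2 + 54 * X ^ 3 + 6 * X ^ 4 + 11 * X ^ 5 + 17 * X ^ 6 + 38 * X ^ 7 + 48 * X ^ 8) :=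
    ⟨47 + 48 * X + 39 * X ^ 2 + 35 * X ^ 3 + 17 * X ^ 4 + 22 * X ^ 5 + 53 * X ^ 6 + 53 * X ^ 7, by rw [f]; linear_combination (6537 + 1793 * X + 479 * X ^ 2 + 784 * X ^ 3 + (-1602) * X ^ 4 + 1144 * X ^ 5 + 5022 * X ^ 6 + 1815 * X ^ 7 + (-5402) * X ^ 8 + (-46) * X ^ 9 + (-216) * X ^ 10 + (-68) * X ^ 11 + 248 * X ^ 12 + 79 * X ^ 13 + 80 * X ^ 14 + 47 * X ^ 15 + 28 * X ^ 16 : (ZMod 59)[X]) * h59⟩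
  have h := mulmod D6962 D3481 h3
  rwa [← pow_add, show 6962 + 3481 = 10443 from rfl] at h

lemma D20886 : f ∣ X ^ 20886 - (15 + 42 * X + 22 * X ^ 2 + 10 * X ^ 3 + 53 * X ^ 4 + 41 * X ^ 5 + 28 * X ^ 6 + 19 * X ^ 7 + 19 * X ^ 8) := by
  have h3 : f ∣ (13 + 43 * X + 16 * X ^ 2 + 54 * X ^ 3 + 6 * X ^ 4 + 11 * X ^ 5 + 17 * X ^ 6 + 38 * X ^ 7 + 48 * X ^ 8) * (13 + 43 * X + 16 * X ^ 2 + 54 * X ^ 3 + 6 * X ^ 4 + 11 * X ^ 5 + 17 * X ^ 6 + 38 * X ^ 7 + 48 * X ^ 8) - (15 + 42 * X + 22 * X ^ 2 + 10 * X ^ 3 + 53 * X ^ 4 + 41 * X ^ 5 + 28 * X ^ 6 + 19 * X ^ 7 + 19 * X ^ 8) :=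
    ⟨4 + 57 * X + 15 * X ^ 2 + 54 * X ^ 3 + 51 * X ^ 4 + 5 * X ^ 5 + 58 * X ^ 6 + 3 * X ^ 7, by rw [f]; linear_combination (558 + 7516 * X + (-3815) * X ^ 2 + 5974 * X ^ 3 + 1393 * X ^ 4 + (-4965) * X ^ 5 + 7580 * X ^ 6 + (-5963) * X ^ 7 + (-369) * X ^ 8 + 149 * X ^ 9 + (-253) * X ^ 10 + 275 * X ^ 11 + 56 * X ^ 12 + 40 * X ^ 13 + 55 * X ^ 14 + 61 * X ^ 15 + 39 * X ^ 16 : (ZMod 59)[X]) * h59⟩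
  have h := mulmod D10443 D10443 h3
  rwa [← pow_add, show 10443 + 10443 = 20886 from rfl] at h

lemma D24367 : f ∣ X ^ 24367 - (55 + 25 * X + 39 * X ^ 2 + 6 * X ^ 3 + 10 * X ^ 4 + 46 * X ^ 5 + 38 * X ^ 6 + 47 * X ^ 7 + 52 * X ^ 8) := by
  have h3 : f ∣ (15 + 42 * X + 22 * X ^ 2 + 10 * X ^ 3 + 53 * X ^ 4 + 41 * X ^ 5 + 28 * X ^ 6 + 19 * X ^ 7 + 19 * X ^ 8) * (48 + 13 * X + 56 * X ^ 2 + 24 * X ^ 3 + 29 * X ^ 4 + 4 * X ^ 5 + 24 * X ^ 6 + 47 * X ^ 7 + 55 * X ^ 8) - (55 + 25 * X + 39 * X ^ 2 + 6 * X ^ 3 + 10 * X ^ 4 + 46 * X ^ 5 + 38 * X ^ 6 + 47 * X ^ 7 + 52 * X ^ 8) :=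
    ⟨28 + 41 * X + 47 * X ^ 2 + 31 * X ^ 3 + 40 * X ^ 4 + 54 * X ^ 5 + 58 * X ^ 6 + 42 * X ^ 7, by rw [f]; linear_combination (3899 + 2814 * X + 2297 * X ^ 2 + (-592) * X ^ 3 + 2145 * X ^ 4 + 3139 * X ^ 5 + 2303 * X ^ 6 + (-216) * X ^ 7 + (-4491) * X ^ 8 + (-219) * X ^ 9 + (-188) * X ^ 10 + 18 * X ^ 11 + 258 * X ^ 12 + 83 * X ^ 13 + 51 * X ^ 14 + 34 * X ^ 15 + 17 * X ^ 16 : (ZMod 59)[X]) * h59⟩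
  have h := mulmod D20886 D3481 h3
  exact powstep (by norm_num) h

lemma D48734 : f ∣ X ^ 48734 - (23 + 15 * X + 40 * X ^ 2 + 30 * X ^ 3 + 26 * X ^ 4 + 43 * X ^ 5 + 39 * X ^ 6 + 5 * X ^ 7 + 11 * X ^ 8) := by
  have h3 : f ∣ (55 + 25 * X + 39 * X ^ 2 + 6 * X ^ 3 + 10 * X ^ 4 + 46 * X ^ 5 + 38 * X ^ 6 + 47 * X ^ 7 + 52 * X ^ 8) * (55 + 25 * X + 39 * X ^ 2 + 6 * X ^ 3 + 10 * X ^ 4 + 46 * X ^ 5 + 38 * X ^ 6 + 47 * X ^ 7 + 52 * X ^ 8) - (23 + 15 * X + 40 * X ^ 2 + 30 * X ^ 3 + 26 * X ^ 4 + 43 * X ^ 5 + 39 * X ^ 6 + 5 * X ^ 7 + 11 * X ^ 8) :=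
    ⟨32 + 46 * X + 55 * X ^ 2 + 58 * X ^ 3 + 14 * X ^ 4 + 26 * X ^ 5 + 20 * X ^ 6 + 49 * X ^ 7, by rw [f]; linear_combination (4494 + 3101 * X + 2929 * X ^ 2 + 2300 * X ^ 3 + (-4355) * X ^ 4 + 1939 * X ^ 5 + (-133) * X ^ 6 + 4687 * X ^ 7 + (-4847) * X ^ 8 + (-20) * X ^ 9 + (-19) * X ^ 10 + (-159) * X ^ 11 + 280 * X ^ 12 + 156 * X ^ 13 + 105 * X ^ 14 + 85 * X ^ 15 + 45 * X ^ 16 : (ZMod 59)[X]) * h59⟩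
  have h := mulmod D24367 D24367 h3
  exact powstep (by norm_num) h

lemma D97468 : f ∣ X ^ 97468 - (25 + 21 * X + 53 * X ^ 2 + 5 * X ^ 3 + 57 * X ^ 4 + 13 * X ^ 5 + 49 * X ^ 6 + 7 * X ^ 7 + 32 * X ^ 8) := by
  have h3 : f ∣ (23 + 15 * X + 40 * X ^ 2 + 30 * X ^ 3 + 26 * X ^ 4 + 43 * X ^ 5 + 39 * X ^ 6 + 5 * X ^ 7 + 11 * X ^ 8) * (23 + 15 * X + 40 * X ^ 2 + 30 * X ^ 3 + 26 * X ^ 4 + 43 * X ^ 5 + 39 * X ^ 6 + 5 * X ^ 7 + 11 * X ^ 8) - (25 + 21 * X + 53 * X ^ 2 + 5 * X ^ 3 + 57 * X ^ 4 + 13 * X ^ 5 + 49 * X ^ 6 + 7 * X ^ 7 + 32 * X ^ 8) :=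
    ⟨56 + 18 * X + 24 * X ^ 2 + 19 * X ^ 3 + 30 * X ^ 4 + X ^ 5 + X ^ 6 + 3 * X ^ 7, by rw [f]; linear_combination (7784 + (-3321) * X + 1492 * X ^ 2 + 61 * X ^ 3 + 1845 * X ^ 4 + (-2885) * X ^ 5 + 13 * X ^ 6 + 315 * X ^ 7 + (-320) * X ^ 8 + 184 * X ^ 9 + 85 * X ^ 10 + 57 * X ^ 11 + 54 * X ^ 12 + 23 * X ^ 13 + 15 * X ^ 14 + 2 * X ^ 15 + 2 * X ^ 16 : (ZMod 59)[X]) * h59⟩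
  have h := mulmod D48734 D48734 h3
  exact powstep (by norm_num) h

lemma D100949 : f ∣ X ^ 100949 - (55 + 41 * X + 41 * X ^ 2 + 48 * X ^ 3 + 57 * X ^ 4 + 41 * X ^ 5 + 13 * X ^ 6 + 32 * X ^ 7 + 57 * X ^ 8) := by
  have h3 : f ∣ (25 + 21 * X + 53 * X ^ 2 + 5 * X ^ 3 + 57 * X ^ 4 + 13 * X ^ 5 + 49 * X ^ 6 + 7 * X ^ 7 + 32 * X ^ 8) * (48 + 13 * X + 56 * X ^ 2 + 24 * X ^ 3 + 29 * X ^ 4 + 4 * X ^ 5 + 24 * X ^ 6 + 47 * X ^ 7 + 55 * X ^ 8) - (55 + 41 * X + 41 * X ^ 2 + 48 * X ^ 3 + 57 * X ^ 4 + 41 * X ^ 5 + 13 * X ^ 6 + 32 * X ^ 7 + 57 * X ^ 8) :=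
    ⟨42 + 21 * X + 52 * X ^ 2 + 45 * X ^ 3 + 50 * X ^ 4 + 47 * X ^ 5 + 30 * X ^ 6 + 49 * X ^ 7, by rw [f]; linear_combination (5851 + (-1436) * X + 5104 * X ^ 2 + 787 * X ^ 3 + 2055 * X ^ 4 + 1267 * X ^ 5 + (-949) * X ^ 6 + 3539 * X ^ 7 + (-5199) * X ^ 8 + (-88) * X ^ 9 + 2 * X ^ 10 + (-132) * X ^ 11 + 269 * X ^ 12 + 71 * X ^ 13 + 65 * X ^ 14 + 34 * X ^ 15 + 29 * X ^ 16 : (ZMod 59)[X]) * h59⟩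
  have h := mulmod D97468 D3481 h3
  exact powstep (by norm_num) h

lemma D201898 : f ∣ X ^ 201898 - (32 + 14 * X + 58 * X ^ 2 + 57 * X ^ 3 + 57 * X ^ 4 + 22 * X ^ 5 + 44 * X ^ 6 + 54 * X ^ 7 + 58 * X ^ 8) := by
  have h3 : f ∣ (55 + 41 * X + 41 * X ^ 2 + 48 * X ^ 3 + 57 * X ^ 4 + 41 * X ^ 5 + 13 * X ^ 6 + 32 * X ^ 7 + 57 * X ^ 8) * (55 + 41 * X + 41 * X ^ 2 + 48 * X ^ 3 + 57 * X ^ 4 + 41 * X ^ 5 + 13 * X ^ 6 + 32 * X ^ 7 + 57 * X ^ 8) - (32 + 14 * X + 58 * X ^ 2 + 57 * X ^ 3 + 57 * X ^ 4 + 22 * X ^ 5 + 44 * X ^ 6 + 54 * X ^ 7 + 58 * X ^ 8) :=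
    ⟨31 + 39 * X ^ 2 + 26 * X ^ 3 + 8 * X ^ 4 + 34 * X ^ 5 + 2 * X ^ 6 + 4 * X ^ 7, by rw [f]; linear_combination (4355 + (-3152) * X + 5519 * X ^ 2 + (-373) * X ^ 3 + (-1598) * X ^ 4 + 4126 * X ^ 5 + (-3366) * X ^ 6 + 514 * X ^ 7 + (-156) * X ^ 8 + 31 * X ^ 9 + 278 * X ^ 10 + 163 * X ^ 11 + 171 * X ^ 12 + 96 * X ^ 13 + 42 * X ^ 14 + 62 * X ^ 15 + 55 * X ^ 16 : (ZMod 59)[X]) * h59⟩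
  have h := mulmod D100949 D100949 h3
  exact powstep (by norm_num) h

lemma D205379 : f ∣ X ^ 205379 - (8 + 3 * X + 37 * X ^ 2 + 41 * X ^ 3 + 36 * X ^ 4 + 58 * X ^ 5 + X ^ 6 + 50 * X ^ 7 + 47 * X ^ 8) := by
  have h3 : f ∣ (32 + 14 * X + 58 * X ^ 2 + 57 * X ^ 3 + 57 * X ^ 4 + 22 * X ^ 5 + 44 * X ^ 6 + 54 * X ^ 7 + 58 * X ^ 8) * (48 + 13 * X + 56 * X ^ 2 + 24 * X ^ 3 + 29 * X ^ 4 + 4 * X ^ 5 + 24 * X ^ 6 + 47 * X ^ 7 + 55 * X ^ 8) - (8 + 3 * X + 37 * X ^ 2 + 41 * X ^ 3 + 36 * X ^ 4 + 58 * X ^ 5 + X ^ 6 + 50 * X ^ 7 + 47 * X ^ 8) :=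
    ⟨19 + 25 * X + 50 * X ^ 2 + 5 * X ^ 3 + 8 * X ^ 4 + 51 * X ^ 5 + 44 * X ^ 6 + 4 * X ^ 7, by rw [f]; linear_combination (2664 + 1511 * X + 4419 * X ^ 2 + (-4469) * X ^ 3 + 547 * X ^ 4 + 6155 * X ^ 5 + 709 * X ^ 6 + (-3747) * X ^ 7 + (-343) * X ^ 8 + (-220) * X ^ 9 + 98 * X ^ 10 + 291 * X ^ 11 + 146 * X ^ 12 + 85 * X ^ 13 + 109 * X ^ 14 + 96 * X ^ 15 + 54 * X ^ 16 : (ZMod 59)[X]) * h59⟩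
  have h := mulmod D201898 D3481 h3
  exact powstep (by norm_num) h

lemma D410758 : f ∣ X ^ 410758 - (43 + 25 * X + 51 * X ^ 3 + 3 * X ^ 4 + 31 * X ^ 5 + 51 * X ^ 6 + 48 * X ^ 7 + 35 * X ^ 8) := by
  have h3 : f ∣ (8 + 3 * X + 37 * X ^ 2 + 41 * X ^ 3 + 36 * X ^ 4 + 58 * X ^ 5 + X ^ 6 + 50 * X ^ 7 + 47 * X ^ 8) * (8 + 3 * X + 37 * X ^ 2 + 41 * X ^ 3 + 36 * X ^ 4 + 58 * X ^ 5 + X ^ 6 + 50 * X ^ 7 + 47 * X ^ 8) - (43 + 25 * X + 51 * X ^ 3 + 3 * X ^ 4 + 31 * X ^ 5 + 51 * X ^ 6 + 48 * X ^ 7 + 35 * X ^ 8) :=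
    ⟨22 + 42 * X + 36 * X ^ 2 + 42 * X ^ 3 + 53 * X ^ 4 + 54 * X ^ 5 + 58 * X ^ 6 + 26 * X ^ 7, by rw [f]; linear_combination (3055 + 3541 * X + 635 * X ^ 2 + 2049 * X ^ 3 + 2788 * X ^ 4 + 1769 * X ^ 5 + 2326 * X ^ 6 + (-2554) * X ^ 7 + (-2901) * X ^ 8 + (-152) * X ^ 9 + (-56) * X ^ 10 + 164 * X ^ 11 + 258 * X ^ 12 + 103 * X ^ 13 + 46 * X ^ 14 + 80 * X ^ 15 + 37 * X ^ 16 : (ZMod 59)[X]) * h59⟩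
  have h := mulmod D205379 D205379 h3
  exact powstep (by norm_num) h

lemma D616137 : f ∣ X ^ 616137 - (5 + 41 * X + 12 * X ^ 2 + 39 * X ^ 3 + 10 * X ^ 4 + 26 * X ^ 5 + 2 * X ^ 6 + 46 * X ^ 7 + 37 * X ^ 8) := by
  have h3 : f ∣ (43 + 25 * X + 51 * X ^ 3 + 3 * X ^ 4 + 31 * X ^ 5 + 51 * X ^ 6 + 48 * X ^ 7 + 35 * X ^ 8) * (8 + 3 * X + 37 * X ^ 2 + 41 * X ^ 3 + 36 * X ^ 4 + 58 * X ^ 5 + X ^ 6 + 50 * X ^ 7 + 47 * X ^ 8) - (5 + 41 * X + 12 * X ^ 2 + 39 * X ^ 3 + 10 * X ^ 4 + 26 * X ^ 5 + 2 * X ^ 6 + 46 * X ^ 7 + 37 * X ^ 8) :=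
    ⟨18 + 16 * X + 45 * X ^ 2 + 24 * X ^ 3 + 48 * X ^ 4 + 31 * X ^ 5 + 32 * X ^ 6 + 52 * X ^ 7, by rw [f]; linear_combination (2505 + 352 * X + 4610 * X ^ 2 + (-1341) * X ^ 3 + 4060 * X ^ 4 + (-744) * X ^ 5 + 998 * X ^ 6 + 3876 * X ^ 7 + (-5536) * X ^ 8 + 2 * X ^ 9 + (-45) * X ^ 10 + (-78) * X ^ 11 + 278 * X ^ 12 + 118 * X ^ 13 + 83 * X ^ 14 + 70 * X ^ 15 + 27 * X ^ 16 : (ZMod 59)[X]) * h59⟩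
  have h := mulmod D410758 D205379 h3
  exact powstep (by norm_num) h

lemma D1232274 : f ∣ X ^ 1232274 - (38 + 22 * X + 8 * X ^ 2 + 6 * X ^ 3 + 41 * X ^ 4 + 11 * X ^ 5 + 48 * X ^ 6 + 52 * X ^ 7 + 56 * X ^ 8) := by
  have h3 : f ∣ (5 + 41 * X + 12 * X ^ 2 + 39 * X ^ 3 + 10 * X ^ 4 + 26 * X ^ 5 + 2 * X ^ 6 + 46 * X ^ 7 + 37 * X ^ 8) * (5 + 41 * X + 12 * X ^ 2 + 39 * X ^ 3 + 10 * X ^ 4 + 26 * X ^ 5 + 2 * X ^ 6 + 46 * X ^ 7 + 37 * X ^ 8) - (38 + 22 * X + 8 * X ^ 2 + 6 * X ^ 3 + 41 * X ^ 4 + 11 * X ^ 5 + 48 * X ^ 6 + 52 * X ^ 7 + 56 * X ^ 8) :=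
    ⟨51 + 24 * X + 14 * X ^ 2 + 37 * X ^ 3 + 50 * X ^ 4 + 17 * X ^ 5 + 18 * X ^ 6 + 12 * X ^ 7, by rw [f]; linear_combination (7081 + (-1972) * X + (-525) * X ^ 2 + 3592 * X ^ 3 + 2763 * X ^ 4 + (-2833) * X ^ 5 + 715 * X ^ 6 + (-472) * X ^ 7 + (-1379) * X ^ 8 + 105 * X ^ 9 + 14 * X ^ 10 + 53 * X ^ 11 + 99 * X ^ 12 + 39 * X ^ 13 + 39 * X ^ 14 + 58 * X ^ 15 + 23 * X ^ 16 : (ZMod 59)[X]) * h59⟩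
  have h := mulmod D616137 D616137 h3
  exact powstep (by norm_num) h

lemma D1437653 : f ∣ X ^ 1437653 - (50 + 34 * X + 4 * X ^ 2 + 57 * X ^ 3 + 4 * X ^ 4 + 52 * X ^ 5 + 5 * X ^ 6 + 4 * X ^ 7 + 43 * X ^ 8) := by
  have h3 : f ∣ (38 + 22 * X + 8 * X ^ 2 + 6 * X ^ 3 + 41 * X ^ 4 + 11 * X ^ 5 + 48 * X ^ 6 + 52 * X ^ 7 + 56 * X ^ 8) * (8 + 3 * X + 37 * X ^ 2 + 41 * X ^ 3 + 36 * X ^ 4 + 58 * X ^ 5 + X ^ 6 + 50 * X ^ 7 + 47 * X ^ 8) - (50 + 34 * X + 4 * X ^ 2 + 57 * X ^ 3 + 4 * X ^ 4 + 52 * X ^ 5 + 5 * X ^ 6 + 4 * X ^ 7 + 43 * X ^ 8) :=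
    ⟨2 + 7 * X + 46 * X ^ 2 + 32 * X ^ 3 + 18 * X ^ 4 + 23 * X ^ 5 + 42 * X ^ 6 + 36 * X ^ 7, by rw [f]; linear_combination (282 + 768 * X + 5684 * X ^ 2 + (-311) * X ^ 3 + (-812) * X ^ 4 + 1243 * X ^ 5 + 3155 * X ^ 6 + 618 * X ^ 7 + (-3672) * X ^ 8 + (-33) * X ^ 9 + (-146) * X ^ 10 + 67 * X ^ 11 + 257 * X ^ 12 + 116 * X ^ 13 + 85 * X ^ 14 + 90 * X ^ 15 + 44 * X ^ 16 : (ZMod 59)[X]) * h59⟩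
  have h := mulmod D1232274 D205379 h3
  exact powstep (by norm_num) h

lemma D2875306 : f ∣ X ^ 2875306 - (31 + 40 * X + 35 * X ^ 2 + 3 * X ^ 3 + 57 * X ^ 4 + 50 * X ^ 5 + 32 * X ^ 6 + 22 * X ^ 7 + 2 * X ^ 8) := by
  have h3 : f ∣ (50 + 34 * X + 4 * X ^ 2 + 57 * X ^ 3 + 4 * X ^ 4 + 52 * X ^ 5 + 5 * X ^ 6 + 4 * X ^ 7 + 43 * X ^ 8) * (50 + 34 * X + 4 * X ^ 2 + 57 * X ^ 3 + 4 * X ^ 4 + 52 * X ^ 5 + 5 * X ^ 6 + 4 * X ^ 7 + 43 * X ^ 8) - (31 + 40 * X + 35 * X ^ 2 + 3 * X ^ 3 + 57 * X ^ 4 + 50 * X ^ 5 + 32 * X ^ 6 + 22 * X ^ 7 + 2 * X ^ 8) :=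
    ⟨58 + 53 * X + 17 * X ^ 2 + 33 * X ^ 3 + 12 * X ^ 4 + 6 * X ^ 5 + 50 * X ^ 6 + 20 * X ^ 7, by rw [f]; linear_combination (8095 + 1376 * X + (-3133) * X ^ 2 + 2787 * X ^ 3 + (-2191) * X ^ 4 + (-510) * X ^ 5 + 6447 * X ^ 6 + (-2574) * X ^ 7 + (-1880) * X ^ 8 + (-31) * X ^ 9 + (-286) * X ^ 10 + 128 * X ^ 11 + 92 * X ^ 12 + 82 * X ^ 13 + 10 * X ^ 14 + 6 * X ^ 15 + 31 * X ^ 16 : (ZMod 59)[X]) * h59⟩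
  have h := mulmod D1437653 D1437653 h3
  exact powstep (by norm_num) h

lemma D5750612 : f ∣ X ^ 5750612 - (16 + 54 * X + 33 * X ^ 2 + 47 * X ^ 3 + 16 * X ^ 4 + 6 * X ^ 6 + 37 * X ^ 7 + 36 * X ^ 8) := by
  have h3 : f ∣ (31 + 40 * X + 35 * X ^ 2 + 3 * X ^ 3 + 57 * X ^ 4 + 50 * X ^ 5 + 32 * X ^ 6 + 22 * X ^ 7 + 2 * X ^ 8) * (31 + 40 * X + 35 * X ^ 2 + 3 * X ^ 3 + 57 * X ^ 4 + 50 * X ^ 5 + 32 * X ^ 6 + 22 * X ^ 7 + 2 * X ^ 8) - (16 + 54 * X + 33 * X ^ 2 + 47 * X ^ 3 + 16 * X ^ 4 + 6 * X ^ 6 + 37 * X ^ 7 + 36 * X ^ 8) :=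
    ⟨46 + 32 * X + 46 * X ^ 3 + 42 * X ^ 4 + 27 * X ^ 5 + 41 * X ^ 6 + 4 * X ^ 7, by rw [f]; linear_combination (6403 + (-306) * X + (-3269) * X ^ 2 + 6337 * X ^ 3 + 757 * X ^ 4 + (-550) * X ^ 5 + 3067 * X ^ 6 + (-3965) * X ^ 7 + (-467) * X ^ 8 + 14 * X ^ 9 + (-68) * X ^ 10 + 214 * X ^ 11 + 84 * X ^ 12 + 29 * X ^ 13 + 12 * X ^ 14 + X ^ 15 : (ZMod 59)[X]) * h59⟩
  have h := mulmod D2875306 D2875306 h3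
  exact powstep (by norm_num) h

lemma D5955991 : f ∣ X ^ 5955991 - (33 + 29 * X + 4 * X ^ 2 + 52 * X ^ 3 + 31 * X ^ 4 + 50 * X ^ 5 + 44 * X ^ 6 + 12 * X ^ 7 + 13 * X ^ 8) := by
  have h3 : f ∣ (16 + 54 * X + 33 * X ^ 2 + 47 * X ^ 3 + 16 * X ^ 4 + 6 * X ^ 6 + 37 * X ^ 7 + 36 * X ^ 8) * (8 + 3 * X + 37 * X ^ 2 + 41 * X ^ 3 + 36 * X ^ 4 + 58 * X ^ 5 + X ^ 6 + 50 * X ^ 7 + 47 * X ^ 8) - (33 + 29 * X + 4 * X ^ 2 + 52 * X ^ 3 + 31 * X ^ 4 + 50 * X ^ 5 + 44 * X ^ 6 + 12 * X ^ 7 + 13 * X ^ 8) :=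
    ⟨4 + 40 * X + 5 * X ^ 2 + 38 * X ^ 3 + 20 * X ^ 4 + 47 * X ^ 5 + X ^ 6 + 40 * X ^ 7, by rw [f]; linear_combination (557 + 5145 * X + (-3454) * X ^ 2 + 4799 * X ^ 3 + (-1221) * X ^ 4 + 4286 * X ^ 5 + (-4623) * X ^ 6 + 5278 * X ^ 7 + (-4147) * X ^ 8 + (-114) * X ^ 9 + 183 * X ^ 10 + (-138) * X ^ 11 + 202 * X ^ 12 + 54 * X ^ 13 + 36 * X ^ 14 + 62 * X ^ 15 + 28 * X ^ 16 : (ZMod 59)[X]) * h59⟩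
  have h := mulmod D5750612 D205379 h3
  exact powstep (by norm_num) h

lemma D11911982 : f ∣ X ^ 11911982 - (21 + 53 * X + 19 * X ^ 2 + 54 * X ^ 3 + 56 * X ^ 4 + 5 * X ^ 5 + 49 * X ^ 6 + 5 * X ^ 7) := by
  have h3 : f ∣ (33 + 29 * X + 4 * X ^ 2 + 52 * X ^ 3 + 31 * X ^ 4 + 50 * X ^ 5 + 44 * X ^ 6 + 12 * X ^ 7 + 13 * X ^ 8) * (33 + 29 * X + 4 * X ^ 2 + 52 * X ^ 3 + 31 * X ^ 4 + 50 * X ^ 5 + 44 * X ^ 6 + 12 * X ^ 7 + 13 * X ^ 8) - (21 + 53 * X + 19 * X ^ 2 + 54 * X ^ 3 + 56 * X ^ 4 + 5 * X ^ 5 + 49 * X ^ 6 + 5 * X ^ 7) :=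
    ⟨40 + 27 * X + 18 * X ^ 2 + 26 * X ^ 3 + 11 * X ^ 4 + 28 * X ^ 5 + 52 * X ^ 6 + 51 * X ^ 7, by rw [f]; linear_combination (5572 + (-385) * X + (-294) * X ^ 2 + 1710 * X ^ 3 + (-1414) * X ^ 4 + 2751 * X ^ 5 + 4377 * X ^ 6 + 1657 * X ^ 7 + (-5215) * X ^ 8 + (-107) * X ^ 9 + (-243) * X ^ 10 + (-44) * X ^ 11 + 247 * X ^ 12 + 55 * X ^ 13 + 24 * X ^ 14 + 7 * X ^ 15 + 2 * X ^ 16 : (ZMod 59)[X]) * h59⟩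
  have h := mulmod D5955991 D5955991 h3
  exact powstep (by norm_num) h

lemma D12117361 : f ∣ X ^ 12117361 - (23 + 27 * X + 14 * X ^ 2 + 24 * X ^ 3 + 5 * X ^ 4 + 18 * X ^ 5 + 46 * X ^ 6 + 5 * X ^ 7 + 9 * X ^ 8) := by
  have h3 : f ∣ (21 + 53 * X + 19 * X ^ 2 + 54 * X ^ 3 + 56 * X ^ 4 + 5 * X ^ 5 + 49 * X ^ 6 + 5 * X ^ 7) * (8 + 3 * X + 37 * X ^ 2 + 41 * X ^ 3 + 36 * X ^ 4 + 58 * X ^ 5 + X ^ 6 + 50 * X ^ 7 + 47 * X ^ 8) - (23 + 27 * X + 14 * X ^ 2 + 24 * X ^ 3 + 5 * X ^ 4 + 18 * X ^ 5 + 46 * X ^ 6 + 5 * X ^ 7 + 9 * X ^ 8) :=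
    ⟨3 + 55 * X + 18 * X ^ 2 + 5 * X ^ 3 + 15 * X ^ 4 + 13 * X ^ 5 + 58 * X ^ 6, by rw [f]; linear_combination (419 + 7332 * X + (-3210) * X ^ 2 + (-1131) * X ^ 3 + 1495 * X ^ 4 + (-41) * X ^ 5 + 6894 * X ^ 6 + (-5916) * X ^ 7 + 79 * X ^ 8 + (-3) * X ^ 9 + (-231) * X ^ 10 + 334 * X ^ 11 + 71 * X ^ 12 + 46 * X ^ 13 + 46 * X ^ 14 + 3 * X ^ 15 : (ZMod 59)[X]) * h59⟩
  have h := mulmod D11911982 D205379 h3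
  exact powstep (by norm_num) h

lemma dvdPow1 : f ∣ X ^ 59 ^ 1 - (21 + 50 * X ^ 2 + 29 * X ^ 3 + 50 * X ^ 4 + 19 * X ^ 5 + 57 * X ^ 6 + 16 * X ^ 7 + 10 * X ^ 8) := by
  rw [show (59 : ℕ) ^ 1 = 59 from rfl]
  exact D59

lemma dvdPow2 : f ∣ X ^ 59 ^ 2 - (48 + 13 * X + 56 * X ^ 2 + 24 * X ^ 3 + 29 * X ^ 4 + 4 * X ^ 5 + 24 * X ^ 6 + 47 * X ^ 7 + 55 * X ^ 8) := by
  rw [show (59 : ℕ) ^ 2 = 3481 from rfl]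
  exact D3481

lemma dvdPow3 : f ∣ X ^ 59 ^ 3 - (8 + 3 * X + 37 * X ^ 2 + 41 * X ^ 3 + 36 * X ^ 4 + 58 * X ^ 5 + X ^ 6 + 50 * X ^ 7 + 47 * X ^ 8) := by
  rw [show (59 : ℕ) ^ 3 = 205379 from rfl]
  exact D205379

lemma dvdPow4 : f ∣ X ^ 59 ^ 4 - (23 + 27 * X + 14 * X ^ 2 + 24 * X ^ 3 + 5 * X ^ 4 + 18 * X ^ 5 + 46 * X ^ 6 + 5 * X ^ 7 + 9 * X ^ 8) := by
  rw [show (59 : ℕ) ^ 4 = 12117361 from rfl]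
  exact D12117361

lemma cop1 : IsCoprime f ((21 + 50 * X ^ 2 + 29 * X ^ 3 + 50 * X ^ 4 + 19 * X ^ 5 + 57 * X ^ 6 + 16 * X ^ 7 + 10 * X ^ 8) - X) :=
  ⟨25 + 40 * X + 17 * X ^ 2 + 22 * X ^ 3 + 20 * X ^ 4 + 53 * X ^ 5 + 34 * X ^ 6 + 45 * X ^ 7, 9 + 44 * X + 34 * X ^ 2 + 28 * X ^ 3 + 39 * X ^ 4 + 46 * X ^ 5 + 7 * X ^ 6 + 35 * X ^ 7 + 25 * X ^ 8, by rw [f]; linear_combination ((-3468) + (-2935) * X + 1824 * X ^ 2 + (-1179) * X ^ 3 + (-165) * X ^ 4 + (-4964) * X ^ 5 + 920 * X ^ 6 + (-2437) * X ^ 7 + 4979 * X ^ 8 + 474 * X ^ 9 + 251 * X ^ 10 + 271 * X ^ 11 + (-98) * X ^ 12 + 37 * X ^ 13 + 34 * X ^ 14 + 11 * X ^ 15 + 5 * X ^ 16 : (ZMod 59)[X]) * h59⟩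

lemma cop2 : IsCoprime f ((48 + 13 * X + 56 * X ^ 2 + 24 * X ^ 3 + 29 * X ^ 4 + 4 * X ^ 5 + 24 * X ^ 6 + 47 * X ^ 7 + 55 * X ^ 8) - X) :=
  ⟨55 + 18 * X + 18 * X ^ 2 + 36 * X ^ 3 + 44 * X ^ 4 + 3 * X ^ 5 + 14 * X ^ 6 + 36 * X ^ 7, 2 + 14 * X + 5 * X ^ 2 + 2 * X ^ 3 + 56 * X ^ 4 + 16 * X ^ 5 + 4 * X ^ 6 + 38 * X ^ 7 + 9 * X ^ 8, by rw [f]; linear_combination ((-7635) + 3240 * X + (-616) * X ^ 2 + (-2988) * X ^ 3 + (-1906) * X ^ 4 + 4178 * X ^ 5 + (-1445) * X ^ 6 + (-3196) * X ^ 7 + 3985 * X ^ 8 + (-34) * X ^ 9 + 203 * X ^ 10 + 262 * X ^ 11 + (-49) * X ^ 12 + 25 * X ^ 13 + 37 * X ^ 14 + 41 * X ^ 15 + 9 * X ^ 16 : (ZMod 59)[X]) * h59⟩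

lemma cop3 : IsCoprime f ((8 + 3 * X + 37 * X ^ 2 + 41 * X ^ 3 + 36 * X ^ 4 + 58 * X ^ 5 + X ^ 6 + 50 * X ^ 7 + 47 * X ^ 8) - X) :=
  ⟨12 + 47 * X + 45 * X ^ 2 + 20 * X ^ 3 + 50 * X ^ 4 + 55 * X ^ 5 + 17 * X ^ 6 + 57 * X ^ 7, 53 + 3 * X + 40 * X ^ 2 + 35 * X ^ 3 + 14 * X ^ 4 + 31 * X ^ 5 + 33 * X ^ 6 + 34 * X ^ 7 + 49 * X ^ 8, by rw [f]; linear_combination ((-1659) + (-5274) * X + (-1315) * X ^ 2 + 1980 * X ^ 3 + (-4617) * X ^ 4 + (-1957) * X ^ 5 + 3614 * X ^ 6 + (-5924) * X ^ 7 + 6441 * X ^ 8 + 340 * X ^ 9 + 207 * X ^ 10 + 428 * X ^ 11 + (-91) * X ^ 12 + 84 * X ^ 13 + 56 * X ^ 14 + 66 * X ^ 15 + 40 * X ^ 16 : (ZMod 59)[X]) * h59⟩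

lemma cop4 : IsCoprime f ((23 + 27 * X + 14 * X ^ 2 + 24 * X ^ 3 + 5 * X ^ 4 + 18 * X ^ 5 + 46 * X ^ 6 + 5 * X ^ 7 + 9 * X ^ 8) - X) :=
  ⟨47 + 48 * X + 35 * X ^ 3 + 6 * X ^ 4 + 10 * X ^ 5 + 21 * X ^ 6 + 8 * X ^ 7, 15 + 30 * X + 48 * X ^ 2 + 47 * X ^ 3 + 7 * X ^ 4 + 47 * X ^ 5 + 54 * X ^ 6 + 54 * X ^ 7 + 45 * X ^ 8, by rw [f]; linear_combination ((-6520) + (-1752) * X + 5034 * X ^ 2 + (-4705) * X ^ 3 + 3270 * X ^ 4 + (-545) * X ^ 5 + (-1880) * X ^ 6 + 1406 * X ^ 7 + 908 * X ^ 8 + 186 * X ^ 9 + 189 * X ^ 10 + 63 * X ^ 11 + 36 * X ^ 12 + 65 * X ^ 13 + 47 * X ^ 14 + 12 * X ^ 15 + 7 * X ^ 16 : (ZMod 59)[X]) * h59⟩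


lemma irred_dvd (g : (ZMod 59)[X]) (hg : Irreducible g) :
    g ∣ X ^ 59 ^ g.natDegree - X := by
  haveI := Fact.mk hg
  have hg0 : g ≠ 0 := hg.ne_zero
  let pb := AdjoinRoot.powerBasis hg0
  haveI : Module.Finite (ZMod 59) (AdjoinRoot g) := pb.finite
  haveI : Finite (AdjoinRoot g) := Module.finite_of_finite (ZMod 59)
  haveI : Fintype (AdjoinRoot g) := Fintype.ofFinite _
  have hcard : Fintype.card (AdjoinRoot g) = 59 ^ g.natDegree := by
    rw [Module.card_fintype pb.basis, ZMod.card, Fintype.card_fin,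
      show pb.dim = g.natDegree from rfl]
  have hx : (AdjoinRoot.root g) ^ 59 ^ g.natDegree = AdjoinRoot.root g := by
    rw [← hcard]; exact FiniteField.pow_card _
  have h0 : (Polynomial.aeval (AdjoinRoot.root g))
      (X ^ 59 ^ g.natDegree - X : (ZMod 59)[X]) = 0 := by
    simp [hx]
  have hdvd := minpoly.dvd (ZMod 59) _ h0
  rw [AdjoinRoot.minpoly_root hg0] at hdvd
  exact (dvd_mul_right g _).trans hdvd

lemma f_natDegree : f.natDegree = 9 := by
  rw [f]; compute_degree!

lemma f_monic : f.Monic := by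
  rw [f]; monicity!

lemma f_irred : Irreducible f := by
  have hf0 : f ≠ 0 := f_monic.ne_zero
  constructor
  · intro hu
    have := natDegree_eq_zero_of_isUnit hu
    rw [f_natDegree] at this
    exact absurd this (by norm_num)
  · intro a b hab
    by_contra hcon
    push_neg at hcon
    obtain ⟨ha, hb⟩ := hcon
    have ha0 : a ≠ 0 := by rintro rfl; exact hf0 (by simp [hab])
    have hb0 : b ≠ 0 := by rintro rfl; exact hf0 (by simp [hab])
    have hdeg : a.natDegree + b.natDegree = 9 := by
      rw [← natDegree_mul ha0 hb0, ← hab, f_natDegree]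
    obtain ⟨c, hc0, hcu, hcdvd, hcle⟩ :
        ∃ c : (ZMod 59)[X], c ≠ 0 ∧ ¬IsUnit c ∧ c ∣ f ∧ c.natDegree ≤ 4 := by
      rcases le_or_gt a.natDegree 4 with h | h
      · exact ⟨a, ha0, ha, ⟨b, hab⟩, h⟩
      · exact ⟨b, hb0, hb, ⟨a, by rw [hab, mul_comm]⟩, by omega⟩
    obtain ⟨g, hgi, hgc⟩ := WfDvdMonoid.exists_irreducible_factor hcu hc0
    have hgf : g ∣ f := hgc.trans hcdvd
    have hgd1 : 1 ≤ g.natDegree := hgi.natDegree_pos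
    have hgd4 : g.natDegree ≤ 4 :=
      le_trans (natDegree_le_of_dvd hgc hc0) hcle
    have hX := irred_dvd g hgi
    have key : ∀ k : ℕ, ∀ rr : (ZMod 59)[X], g.natDegree = k →
        f ∣ X ^ 59 ^ k - rr → IsCoprime f (rr - X) → False := by
      intro k rr hk h1 h2
      rw [hk] at hX
      have hgr : g ∣ rr - X := by
        have h3 := dvd_sub (hgf.trans h1) hX
        rw [sub_sub_sub_cancel_left] at h3
        rw [show rr - X = -(X - rr) from by ring]
        exact dvd_neg.mpr h3
      exact hgi.not_isUnit (h2.isUnit_of_dvd' hgf hgr)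
    have : g.natDegree = 1 ∨ g.natDegree = 2 ∨ g.natDegree = 3 ∨ g.natDegree = 4 := by omega
    rcases this with h | h | h | h
    · exact key 1 _ h dvdPow1 cop1
    · exact key 2 _ h dvdPow2 cop2
    · exact key 3 _ h dvdPow3 cop3
    · exact key 4 _ h dvdPow4 cop4

end P2Cert

/-- The polynomial `p₂(z) = z⁹ − 3z⁸ − 16z⁶ − 192z⁵ + 384z⁴ + 128z³ + 6144z − 8192`
is irreducible over `ℚ`. -/
theorem p2_irreducible :
    Irreducible (X ^ 9 - 3 * X ^ 8 - 16 * X ^ 6 - 192 * X ^ 5 + 384 * X ^ 4 +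
      128 * X ^ 3 + 6144 * X - 8192 : ℚ[X]) := by
  haveI : Fact (Nat.Prime 59) := ⟨by norm_num⟩
  set F : ℤ[X] :=
    X ^ 9 - 3 * X ^ 8 - 16 * X ^ 6 - 192 * X ^ 5 + 384 * X ^ 4 +
      128 * X ^ 3 + 6144 * X - 8192 with hF
  have hmon : F.Monic := by rw [hF]; monicity!
  have hmap59 : F.map (Int.castRingHom (ZMod 59)) = P2Cert.f := by
    rw [hF, P2Cert.f]
    simp only [Polynomial.map_sub, Polynomial.map_add, Polynomial.map_mul,
      Polynomial.map_pow, Polynomial.map_X, Polynomial.map_ofNat]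
  have hFi : Irreducible F :=
    hmon.irreducible_of_irreducible_map _ _ (hmap59 ▸ P2Cert.f_irred)
  have hmapQ : F.map (Int.castRingHom ℚ) =
      (X ^ 9 - 3 * X ^ 8 - 16 * X ^ 6 - 192 * X ^ 5 + 384 * X ^ 4 +
        128 * X ^ 3 + 6144 * X - 8192 : ℚ[X]) := by
    rw [hF]
    simp only [Polynomial.map_sub, Polynomial.map_add, Polynomial.map_mul,
      Polynomial.map_pow, Polynomial.map_X, Polynomial.map_ofNat]
  rw [← hmapQ]
  exact (IsPrimitive.Int.irreducible_iff_irreducible_map_cast hmon.isPrimitive).mp hFi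
end

section
/- Let α₀ : ℙ³ ⇢ ℙ³ be given by [x₁:x₂:x₃:x₄] ↦ [x₁(x₂−x₄)(x₃−x₄) : x₄(x₂−x₄)(x₃−x₄) : x₄(x₂−x₁)(x₃−x₄) : x₄(x₂−x₄)(x₃−x₁)]. The common zero locus in ℙ³ of the four defining homogeneous polynomials (the indeterminacy set of α₀) equals the union of the six lines {x₁=x₄=0}, {x₂=x₄=0}, {x₃=x₄=0}, {x₁=x₂=x₄}, {x₁=x₃=x₄}, {x₂=x₃=x₄}. -/
/-!
Split according to `x₄`. On the plane `x₄ = 0` only the first polynomial survives, and it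
becomes `x₁x₂x₃`, cutting out the three coordinate lines. Off that plane one may divide by `x₄`,
and the second polynomial forces `x₂ = x₄` or `x₃ = x₄`; the third, respectively the fourth,
then forces one more coordinate to equal `x₄`, and the first polynomial vanishes along with the
second.
-/

section

variable {R : Type*} [CommRing R] [NoZeroDivisors R]

def Alpha0Vanishes (a b c d : R) : Prop :=
  a * (b - d) * (c - d) = 0 ∧ d * (b - d) * (c - d) = 0 ∧
    d * (b - a) * (c - d) = 0 ∧ d * (b - d) * (c - a) = 0

theorem alpha0Vanishes_fourth_zero_iff {a b c : R} :
    Alpha0Vanishes a b c 0 ↔ a = 0 ∨ b = 0 ∨ c = 0 := by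
  simp [Alpha0Vanishes, or_assoc]

theorem alpha0Vanishes_iff_of_fourth_ne_zero {a b c d : R} (hd : d ≠ 0) :
    Alpha0Vanishes a b c d ↔ (a = b ∧ b = d) ∨ (a = c ∧ c = d) ∨ (b = c ∧ c = d) := by
  simp only [Alpha0Vanishes, mul_assoc, mul_eq_zero, hd, false_or, sub_eq_zero]
  constructor
  · rintro ⟨-, rfl | rfl, hba | hcb, hcb' | hca⟩ <;> simp_all [eq_comm]
  · rintro (⟨rfl, rfl⟩ | ⟨rfl, rfl⟩ | ⟨rfl, rfl⟩) <;> simp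

end

theorem alpha0_indeterminacy_set_general (x : Fin 4 → ℂ) :
    (x 0 * (x 1 - x 3) * (x 2 - x 3) = 0 ∧
     x 3 * (x 1 - x 3) * (x 2 - x 3) = 0 ∧
     x 3 * (x 1 - x 0) * (x 2 - x 3) = 0 ∧
     x 3 * (x 1 - x 3) * (x 2 - x 0) = 0) ↔
    ((x 0 = 0 ∧ x 3 = 0) ∨ (x 1 = 0 ∧ x 3 = 0) ∨ (x 2 = 0 ∧ x 3 = 0) ∨
     (x 0 = x 1 ∧ x 1 = x 3) ∨ (x 0 = x 2 ∧ x 2 = x 3) ∨ (x 1 = x 2 ∧ x 2 = x 3)) := by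
  change Alpha0Vanishes (x 0) (x 1) (x 2) (x 3) ↔ _
  generalize x 0 = a, x 1 = b, x 2 = c, x 3 = d
  rcases eq_or_ne d 0 with rfl | hd
  · rw [alpha0Vanishes_fourth_zero_iff]
    constructor
    · rintro (h | h | h) <;> simp [h]
    · rintro (⟨h, -⟩ | ⟨h, -⟩ | ⟨h, -⟩ | ⟨-, h⟩ | ⟨-, h⟩ | ⟨-, h⟩) <;> simp [h]
  · rw [alpha0Vanishes_iff_of_fourth_ne_zero hd]
    simp [hd]

/-- The indeterminacy set of
`α₀([x₁:x₂:x₃:x₄]) = [x₁(x₂−x₄)(x₃−x₄) : x₄(x₂−x₄)(x₃−x₄) : x₄(x₂−x₁)(x₃−x₄) : x₄(x₂−x₄)(x₃−x₁)]`,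
i.e. the common zero locus in `ℙ³` of its four defining homogeneous polynomials,
is the union of the six lines `{x₁=x₄=0}`, `{x₂=x₄=0}`, `{x₃=x₄=0}`,
`{x₁=x₂=x₄}`, `{x₁=x₃=x₄}`, `{x₂=x₃=x₄}`. -/
theorem alpha0_indeterminacy_set (x : Fin 4 → ℂ) (hx : x ≠ 0) :
    (x 0 * (x 1 - x 3) * (x 2 - x 3) = 0 ∧
     x 3 * (x 1 - x 3) * (x 2 - x 3) = 0 ∧
     x 3 * (x 1 - x 0) * (x 2 - x 3) = 0 ∧
     x 3 * (x 1 - x 3) * (x 2 - x 0) = 0) ↔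
    ((x 0 = 0 ∧ x 3 = 0) ∨ (x 1 = 0 ∧ x 3 = 0) ∨ (x 2 = 0 ∧ x 3 = 0) ∨
     (x 0 = x 1 ∧ x 1 = x 3) ∨ (x 0 = x 2 ∧ x 2 = x 3) ∨ (x 1 = x 2 ∧ x 2 = x 3)) :=
  alpha0_indeterminacy_set_general x
end
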